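/- arXiv:1907.02723 — 2 statements merged into one kernel-verified Lean document; each statement's English description precedes it below -/
import Mathlib

section
/- There exists a constant C₁ > 0 such that for all t ≥ 0, −2 + 1.97t + (2+4t)/(0.01+2t(1+t))^2 ≥ C₁. -/
/-! Clearing the positive denominator `(0.01 + 2t(1+t))²` turns the bound with `C₁ = 0.1` into a
polynomial inequality of degree five on `t ≥ 0`, which has a sum-of-squares certificate. -/

/-- The polynomial gap is smallest near `t ≈ 0.683`, where the certificate squares are centred. -/
theorem scalarCurvature_numerator_bound {t : ℝ} (ht : 0 ≤ t) :
    (2.1 - 1.97 * t) * (0.01 + 2 * t * (1 + t)) ^ 2 ≤ 2 + 4 * t := by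
  nlinarith [mul_nonneg ht (sq_nonneg (t - 0.683)), sq_nonneg (t * t - 0.683)]

theorem stmt_2 : ∃ C₁ : ℝ, 0 < C₁ ∧ ∀ t : ℝ, 0 ≤ t →
    C₁ ≤ -2 + 1.97*t + (2 + 4*t)/(0.01 + 2*t*(1+t))^2 := by
  refine ⟨0.1, by norm_num, fun t ht => ?_⟩
  have hD : 0 < (0.01 + 2 * t * (1 + t)) ^ 2 := by positivity
  have := (le_div_iff₀ hD).2 (scalarCurvature_numerator_bound ht)
  linarith
end

section
/- Let g(t) = 7.88t^5 + 7.76t^4 − 8.0412t^3 − 8.0012t^2 + 3.920197t + 1.9998 and h(t) = (0.01+2t(1+t))². Then the infimum of g(t)/h(t) over t ∈ [0,∞) is strictly positive. -/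
lemma tenth_mul_sq_le_quintic {t : ℝ} (ht : 0 ≤ t) :
    (0.1:ℝ) * (0.01 + 2*t*(1+t))^2 ≤
      7.88*t^5 + 7.76*t^4 - 8.0412*t^3 - 8.0012*t^2 + 3.920197*t + 1.9998 := by
  -- the difference of the two sides has its minimum, about 0.66, near t = 0.73
  nlinarith [sq_nonneg (t - 0.8), mul_nonneg ht (sq_nonneg (t - 0.8)),
    mul_nonneg (mul_nonneg ht ht) (sq_nonneg (t - 0.8))]

theorem stmt_11 (g h : ℝ → ℝ)
    (hg : g = fun t => 7.88*t^5 + 7.76*t^4 - 8.0412*t^3 - 8.0012*t^2 + 3.920197*t + 1.9998)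
    (hh : h = fun t => (0.01 + 2*t*(1+t))^2) :
    0 < sInf ((fun t => g t / h t) '' Set.Ici (0:ℝ)) := by
  refine lt_of_lt_of_le (by norm_num : (0:ℝ) < 0.1) (le_csInf (Set.nonempty_Ici.image _) ?_)
  rintro _ ⟨t, ht, rfl⟩
  have ht : 0 ≤ t := ht
  subst hg hh
  rw [le_div_iff₀ (by positivity)]
  exact tenth_mul_sq_le_quintic ht
end
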